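/- arXiv:1211.3949 — 3 statements merged into one kernel-verified Lean document; each statement's English description precedes it below -/
import Mathlib

section
/- For every f ∈ C↑_sur(b^ω), the set Y_f = {max f⁻¹(W_s) : s ∈ b^{<ω}} \ {max b^ω} is a subset of A_b that is order isomorphic to ℚ under ≤_lex. -/
noncomputable section
open Classical

/-- Lexicographic strict order on `ℕ → Fin b`. -/
def lexLT (b : ℕ) (x y : ℕ → Fin b) : Prop :=
  ∃ n, (∀ m, m < n → x m = y m) ∧ x n < y n

/-- Lexicographic order `≤_lex` on `ℕ → Fin b`. -/
def lexLE (b : ℕ) (x y : ℕ → Fin b) : Prop := x = y ∨ lexLT b x y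

def IsGreatestLex (b : ℕ) (S : Set (ℕ → Fin b)) (x : ℕ → Fin b) : Prop :=
  x ∈ S ∧ ∀ y ∈ S, lexLE b y x

def IsLeastLex (b : ℕ) (S : Set (ℕ → Fin b)) (x : ℕ → Fin b) : Prop :=
  x ∈ S ∧ ∀ y ∈ S, lexLE b x y

/-- `S` is an interval for the lexicographic order. -/
def LexInterval (b : ℕ) (S : Set (ℕ → Fin b)) : Prop :=
  ∀ x ∈ S, ∀ y ∈ S, ∀ z, lexLE b x z → lexLE b z y → z ∈ S

/-- The basic clopen set of sequences extending the finite sequence `s`. -/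
def W (b : ℕ) (s : List (Fin b)) : Set (ℕ → Fin b) :=
  {x | ∀ i, (hi : i < s.length) → x i = s.get ⟨i, hi⟩}

/-- Continuous nondecreasing surjections of `b^ω`, i.e. members of `C↑_sur(b^ω)`. -/
def CSur (b : ℕ) (f : (ℕ → Fin b) → (ℕ → Fin b)) : Prop :=
  Continuous f ∧ Function.Surjective f ∧ ∀ x y, lexLE b x y → lexLE b (f x) (f y)

/-- A filtering on `b^ω`. -/
def Filtering (b : ℕ) (U : List (Fin b) → Set (ℕ → Fin b)) : Prop :=
  (∀ s, (U s).Nonempty ∧ IsClopen (U s) ∧ LexInterval b (U s)) ∧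
  U [] = Set.univ ∧
  (∀ s, U s = ⋃ i : Fin b, U (s ++ [i])) ∧
  (∀ s, ∀ i j : Fin b, i ≠ j → Disjoint (U (s ++ [i])) (U (s ++ [j]))) ∧
  (∀ s, ∀ i j : Fin b, i < j → ∀ x y,
    IsGreatestLex b (U (s ++ [i])) x → IsGreatestLex b (U (s ++ [j])) y → lexLT b x y)

/-- `A_b`: sequences eventually equal to `b-1` (the top of `Fin b`), except the constant
top sequence (the lexicographic maximum of `b^ω`). -/
def AbSet (b : ℕ) : Set (ℕ → Fin b) :=
  {x | (∃ N, ∀ n, N ≤ n → ∀ j : Fin b, j ≤ x n) ∧ ¬ ∀ n, ∀ j : Fin b, j ≤ x n}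

/-- `Y` is order isomorphic to `ℚ` with respect to the lexicographic order. -/
def OrderIsoQ (b : ℕ) (Y : Set (ℕ → Fin b)) : Prop :=
  ∃ e : ℚ ≃ Y, ∀ p q : ℚ, p ≤ q ↔ lexLE b (e p).1 (e q).1

/-- `Y_f = {max f⁻¹(W_s) : s ∈ b^{<ω}} \ {max b^ω}`. -/
def Yset (b : ℕ) (f : (ℕ → Fin b) → (ℕ → Fin b)) : Set (ℕ → Fin b) :=
  {x | (∃ s : List (Fin b), IsGreatestLex b (f ⁻¹' W b s) x) ∧ ¬ ∀ n, ∀ j : Fin b, j ≤ x n}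

/-- The metric `ρ_b` on `b^ω`. -/
def rhoB (b : ℕ) (x y : ℕ → Fin b) : ℝ :=
  if h : x = y then 0 else (2 : ℝ) ^ (-(Nat.find (Function.ne_iff.mp h) : ℤ))

/-- The sup-metric `ρ_∞` on `C↑_sur(b^ω)`. -/
def rhoInf (b : ℕ) (f g : (ℕ → Fin b) → (ℕ → Fin b)) : ℝ :=
  ⨆ x, rhoB b (f x) (g x)

/-- `⌊log₂(1/ε)⌋ + 1`. -/
def kOf (ε : ℝ) : ℕ := ⌊Real.logb 2 (1 / ε)⌋₊ + 1

/-- The `l`-th odd tangent number `t_l = tan^{(2l-1)}(0)`. -/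
def oddTangent (l : ℕ) : ℝ := iteratedDeriv (2 * l - 1) Real.tan 0

/-- The lexicographically increasing enumeration of `b^k`: `sEnum b k hb i` is the
`i`-th element of `b^k` in lexicographic order (base-`b` digits, most significant first). -/
def sEnum (b k : ℕ) (hb : 0 < b) (i : ℕ) : List (Fin b) :=
  List.ofFn fun j : Fin k => (⟨i / b ^ (k - 1 - (j : ℕ)) % b, Nat.mod_lt _ hb⟩ : Fin b)

end

/-!
Work in the linear order `Lex (ℕ → Fin b)`. There `toLex` is upper semicontinuous, so closed sets
have lexicographic maxima, and the maximum of an open set is eventually `b - 1`. If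
`y = max f⁻¹(W_s)`, then `f y = max W_s` because `f` is monotone and onto, and `f y < f x` for
every `x > y`. An eventually-`(b - 1)` sequence is approached from below inside each of its
cylinders, which yields elements strictly between it and any smaller sequence. Finally, given
`u < v`, a cylinder `W_t ∋ u` lies below `v`, and `max f⁻¹(W_t)` is a point of `Y_f` above every
preimage of `u` with image below `v`. This produces points of `Y_f` below, above and between given
ones, so `Y_f` is a countable dense linear order without endpoints: a copy of `ℚ` by Cantor.
-/

open Function PiNat

section LexPi

variable {β : Type*} [LinearOrder β]

theorem exists_cylinder_toLex_lt {u : ℕ → β} {v : Lex (ℕ → β)} (h : toLex u < v) :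
    ∃ n, ∀ x ∈ cylinder u n, toLex x < v := by
  obtain ⟨n, hagree, hlt⟩ := h
  refine ⟨n + 1, fun x hx => ⟨n, fun m hm => ?_, ?_⟩⟩
  · rw [← hagree m hm]
    exact mem_cylinder_iff.1 hx m (by omega)
  · change x n < v n
    rw [mem_cylinder_iff.1 hx n (by omega)]
    exact hlt

theorem exists_cylinder_lt_toLex {u : Lex (ℕ → β)} {v : ℕ → β} (h : u < toLex v) :
    ∃ n, ∀ x ∈ cylinder v n, u < toLex x := by
  obtain ⟨n, hagree, hlt⟩ := h
  refine ⟨n + 1, fun x hx => ⟨n, fun m hm => ?_, ?_⟩⟩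
  · rw [hagree m hm]
    exact (mem_cylinder_iff.1 hx m (by omega)).symm
  · change u n < x n
    rw [mem_cylinder_iff.1 hx n (by omega)]
    exact hlt

theorem upperSemicontinuous_toLex [TopologicalSpace β] [DiscreteTopology β] :
    UpperSemicontinuous (toLex : (ℕ → β) → Lex (ℕ → β)) := fun u _ h => by
  obtain ⟨n, hn⟩ := exists_cylinder_toLex_lt h
  exact Filter.mem_of_superset ((isOpen_cylinder _ u n).mem_nhds (self_mem_cylinder u n)) hn

theorem eventually_isTop_of_isMaxOn [TopologicalSpace β] [DiscreteTopology β]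
    {S : Set (ℕ → β)} {y : ℕ → β} (hS : IsOpen S) (hy : y ∈ S) (hmax : IsMaxOn toLex S y) :
    ∃ N, ∀ m, N ≤ m → IsTop (y m) := by
  obtain ⟨_, ⟨x, N, rfl⟩, hyx, hsub⟩ :=
    (isTopologicalBasis_cylinders _).exists_subset_of_mem_open hy hS
  rw [← mem_cylinder_iff_eq.1 hyx] at hsub
  refine ⟨N, fun m hm j => ?_⟩
  exact Pi.toLex_update_le_self_iff.1 <|
    isMaxOn_iff.1 hmax _ (hsub (cylinder_anti y hm (update_mem_cylinder y m j)))

variable [Nontrivial β]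

theorem exists_toLex_lt_mem_cylinder {c : ℕ → β} {N : ℕ} (hc : ∀ m, N ≤ m → IsTop (c m))
    (n : ℕ) : ∃ u ∈ cylinder c n, toLex u < toLex c := by
  obtain ⟨j, hj⟩ := exists_ne (c (max n N))
  exact ⟨update c (max n N) j, cylinder_anti c (le_max_left n N) (update_mem_cylinder _ _ _),
    Pi.toLex_update_lt_self_iff.2 ((hc _ (le_max_right n N) j).lt_of_ne hj)⟩

theorem exists_between_of_eventually_isTop {a c : ℕ → β} {N : ℕ}
    (hc : ∀ m, N ≤ m → IsTop (c m)) (h : toLex a < toLex c) :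
    ∃ u, toLex a < toLex u ∧ toLex u < toLex c := by
  obtain ⟨n, hn⟩ := exists_cylinder_lt_toLex h
  obtain ⟨u, hu, hlt⟩ := exists_toLex_lt_mem_cylinder hc n
  exact ⟨u, hn u hu, hlt⟩

end LexPi

section FinDigits

variable {b : ℕ}

theorem lexLE_iff {x y : ℕ → Fin b} : lexLE b x y ↔ toLex x ≤ toLex y := by
  rw [lexLE, le_iff_eq_or_lt, toLex_inj]
  rfl

theorem isGreatestLex_iff {S : Set (ℕ → Fin b)} {x : ℕ → Fin b} :
    IsGreatestLex b S x ↔ x ∈ S ∧ IsMaxOn toLex S x := by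
  simp only [IsGreatestLex, isMaxOn_iff, lexLE_iff]

theorem isClopen_W (s : List (Fin b)) : IsClopen (W b s) := by
  have hW : W b s = ⋂ i : Fin s.length, (fun x : ℕ → Fin b => x i) ⁻¹' {s.get i} := by
    ext x
    simp only [W, Set.mem_iInter, Set.mem_preimage, Set.mem_singleton_iff]
    exact ⟨fun h i => h i i.2, fun h i hi => h ⟨i, hi⟩⟩
  rw [hW]
  exact isClopen_iInter_of_finite fun i => (isClopen_discrete _).preimage (continuous_apply _)

theorem W_ofFn_eq_cylinder (x : ℕ → Fin b) (n : ℕ) :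
    W b (List.ofFn fun i : Fin n => x i) = cylinder x n := by
  ext y
  simp [W, mem_cylinder_iff]

theorem exists_W_toLex_lt {u : ℕ → Fin b} {v : Lex (ℕ → Fin b)} (h : toLex u < v) :
    ∃ s, u ∈ W b s ∧ ∀ x ∈ W b s, toLex x < v := by
  obtain ⟨n, hn⟩ := exists_cylinder_toLex_lt h
  refine ⟨List.ofFn fun i : Fin n => u i, ?_, ?_⟩ <;> rw [W_ofFn_eq_cylinder]
  exacts [self_mem_cylinder u n, hn]

namespace CSur

variable {f : (ℕ → Fin b) → (ℕ → Fin b)} {x y : ℕ → Fin b}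

theorem toLex_le (hf : CSur b f) (h : toLex x ≤ toLex y) : toLex (f x) ≤ toLex (f y) :=
  lexLE_iff.1 (hf.2.2 x y (lexLE_iff.2 h))

theorem toLex_lt_of_map_lt (hf : CSur b f) (h : toLex (f x) < toLex (f y)) :
    toLex x < toLex y :=
  lt_of_not_ge fun hyx => h.not_ge (hf.toLex_le hyx)

end CSur

section Yset

variable {f : (ℕ → Fin b) → (ℕ → Fin b)} {s : List (Fin b)} {y : ℕ → Fin b}

theorem Yset_subset_AbSet (hf : CSur b f) : Yset b f ⊆ AbSet b := by
  rintro y ⟨⟨s, hy⟩, hy_top⟩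
  rw [isGreatestLex_iff] at hy
  exact ⟨eventually_isTop_of_isMaxOn ((isClopen_W s).isOpen.preimage hf.1) hy.1 hy.2, hy_top⟩

theorem Yset_countable (f : (ℕ → Fin b) → (ℕ → Fin b)) : (Yset b f).Countable := by
  have hmax_unique : ∀ s : List (Fin b), {x | IsGreatestLex b (f ⁻¹' W b s) x}.Subsingleton :=
    fun s x hx z hz =>
      toLex_inj.1 (le_antisymm (lexLE_iff.1 (hz.2 x hx.1)) (lexLE_iff.1 (hx.2 z hz.1)))
  exact (Set.countable_iUnion fun s => (hmax_unique s).countable).mono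
    fun y hy => Set.mem_iUnion.2 hy.1

theorem toLex_map_lt_of_isGreatestLex (hf : CSur b f) (hy : IsGreatestLex b (f ⁻¹' W b s) y)
    {x : ℕ → Fin b} (hyx : toLex y < toLex x) : toLex (f y) < toLex (f x) := by
  refine (hf.toLex_le hyx.le).lt_of_ne fun he => hyx.not_ge ?_
  exact lexLE_iff.1 (hy.2 x (show f x ∈ W b s from toLex_inj.1 he ▸ hy.1))

theorem eventually_isTop_map_of_isGreatestLex (hf : CSur b f)
    (hy : IsGreatestLex b (f ⁻¹' W b s) y) : ∃ N, ∀ m, N ≤ m → IsTop (f y m) := by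
  refine eventually_isTop_of_isMaxOn (isClopen_W s).isOpen hy.1 (isMaxOn_iff.2 fun w hw => ?_)
  obtain ⟨x, rfl⟩ := hf.2.1 w
  exact hf.toLex_le (lexLE_iff.1 (hy.2 x hw))

theorem exists_mem_Yset_of_lt (hf : CSur b f) {u v : ℕ → Fin b} (h : toLex u < toLex v) :
    ∃ z ∈ Yset b f, (∀ x, f x = u → toLex x ≤ toLex z) ∧ toLex (f z) < toLex v := by
  obtain ⟨s, hus, hsv⟩ := exists_W_toLex_lt h
  obtain ⟨x₀, rfl⟩ := hf.2.1 u
  have hS : IsCompact (f ⁻¹' W b s) := ((isClopen_W s).isClosed.preimage hf.1).isCompact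
  obtain ⟨z, hz, hmax⟩ :=
    (upperSemicontinuous_toLex.upperSemicontinuousOn _).exists_isMaxOn ⟨x₀, hus⟩ hS
  have hzv := hsv _ hz
  refine ⟨z, ⟨⟨s, isGreatestLex_iff.2 ⟨hz, hmax⟩⟩, fun hz_top => ?_⟩,
    fun x hx => isMaxOn_iff.1 hmax x (show f x ∈ W b s from hx ▸ hus), hzv⟩
  obtain ⟨x, rfl⟩ := hf.2.1 v
  exact hzv.not_ge (hf.toLex_le (Pi.toLex_monotone fun n => hz_top n (x n)))

variable [Nontrivial (Fin b)]

theorem Yset_nonempty (hf : CSur b f) : (Yset b f).Nonempty := by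
  obtain ⟨u, v, huv⟩ := exists_pair_lt (Lex (ℕ → Fin b))
  obtain ⟨z, hz, -⟩ := exists_mem_Yset_of_lt hf (u := ofLex u) (v := ofLex v) huv
  exact ⟨z, hz⟩

theorem exists_lt_of_mem_Yset (hf : CSur b f) (hy : y ∈ Yset b f) :
    ∃ z ∈ Yset b f, toLex z < toLex y := by
  obtain ⟨⟨s, hys⟩, -⟩ := hy
  obtain ⟨N, hN⟩ := eventually_isTop_map_of_isGreatestLex hf hys
  obtain ⟨u, -, hu⟩ := exists_toLex_lt_mem_cylinder hN 0
  obtain ⟨z, hz, -, hzy⟩ := exists_mem_Yset_of_lt hf hu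
  exact ⟨z, hz, hf.toLex_lt_of_map_lt hzy⟩

theorem exists_gt_of_mem_Yset (hf : CSur b f) (hy : y ∈ Yset b f) :
    ∃ z ∈ Yset b f, toLex y < toLex z := by
  obtain ⟨⟨s, hys⟩, hy_top⟩ := hy
  push Not at hy_top
  obtain ⟨n, j, hj⟩ := hy_top
  obtain ⟨t, ht⟩ := Finite.exists_max (id : Fin b → Fin b)
  have hft : toLex (f y) < toLex fun _ => t :=
    (toLex_map_lt_of_isGreatestLex hf hys (Pi.lt_toLex_update_self_iff.2 hj)).trans_le
      (Pi.toLex_monotone fun _ => ht _)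
  obtain ⟨u, hyu, hu⟩ := exists_between_of_eventually_isTop (N := 0) (fun _ _ => ht) hft
  obtain ⟨z, hz, hzu, -⟩ := exists_mem_Yset_of_lt hf hu
  obtain ⟨x, rfl⟩ := hf.2.1 u
  exact ⟨z, hz, (hf.toLex_lt_of_map_lt hyu).trans_le (hzu x rfl)⟩

theorem exists_between_of_mem_Yset (hf : CSur b f) {y₁ y₂ : ℕ → Fin b} (hy₁ : y₁ ∈ Yset b f)
    (hy₂ : y₂ ∈ Yset b f) (h : toLex y₁ < toLex y₂) :
    ∃ z ∈ Yset b f, toLex y₁ < toLex z ∧ toLex z < toLex y₂ := by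
  obtain ⟨⟨s₁, hy₁⟩, -⟩ := hy₁
  obtain ⟨⟨s₂, hy₂⟩, -⟩ := hy₂
  obtain ⟨N, hN⟩ := eventually_isTop_map_of_isGreatestLex hf hy₂
  obtain ⟨u, hyu, hu⟩ :=
    exists_between_of_eventually_isTop hN (toLex_map_lt_of_isGreatestLex hf hy₁ h)
  obtain ⟨z, hz, hzu, hzy⟩ := exists_mem_Yset_of_lt hf hu
  obtain ⟨x, rfl⟩ := hf.2.1 u
  exact ⟨z, hz, (hf.toLex_lt_of_map_lt hyu).trans_le (hzu x rfl), hf.toLex_lt_of_map_lt hzy⟩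

end Yset

theorem orderIsoQ_of_orderIso {Y : Set (ℕ → Fin b)} (e : ℚ ≃o ofLex ⁻¹' Y) : OrderIsoQ b Y :=
  ⟨e.toEquiv.trans (Equiv.subtypeEquiv ofLex fun _ => Iff.rfl), fun p q => by
    rw [lexLE_iff]
    exact e.le_iff_le.symm⟩

end FinDigits

/-- for every `f ∈ C↑_sur(b^ω)`, the set `Y_f` is a subset of `A_b` that
is order isomorphic to `ℚ` under `≤_lex`. -/
theorem Yset_subset_Ab_iso_Q (b : ℕ) (hb : 2 ≤ b)
    (f : (ℕ → Fin b) → (ℕ → Fin b)) (hf : CSur b f) :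
    Yset b f ⊆ AbSet b ∧ OrderIsoQ b (Yset b f) := by
  have : Nontrivial (Fin b) := Fin.nontrivial_iff_two_le.mpr hb
  set Y := ofLex ⁻¹' Yset b f
  have : Countable Y := ((Yset_countable f).preimage ofLex.injective).to_subtype
  have : Nonempty Y := (Yset_nonempty hf).to_subtype
  have : NoMinOrder Y := ⟨fun y => by
    obtain ⟨z, hz, hzy⟩ := exists_lt_of_mem_Yset hf y.2
    exact ⟨⟨toLex z, hz⟩, hzy⟩⟩
  have : NoMaxOrder Y := ⟨fun y => by
    obtain ⟨z, hz, hyz⟩ := exists_gt_of_mem_Yset hf y.2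
    exact ⟨⟨toLex z, hz⟩, hyz⟩⟩
  have : DenselyOrdered Y := ⟨fun y₁ y₂ h => by
    obtain ⟨z, hz, h₁, h₂⟩ := exists_between_of_mem_Yset hf y₁.2 y₂.2 h
    exact ⟨⟨toLex z, hz⟩, h₁, h₂⟩⟩
  exact ⟨Yset_subset_AbSet hf, orderIsoQ_of_orderIso (Order.iso_of_countable_dense ℚ Y).some⟩
end

section
/- If A ⊆ 2^ω is non scattered (contains a subset order isomorphic to ℚ under ≤_lex), then T = {s ∈ 2^{<ω} : W_s ∩ A is non scattered} is a perfect subtree of 2^{<ω}. -/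
/-- `A ⊆ 2^ω` is non scattered if it contains a subset order isomorphic to `ℚ`. -/
def NonScattered (A : Set (ℕ → Fin 2)) : Prop :=
  ∃ Y ⊆ A, OrderIsoQ 2 Y

/-- `T` is a subtree of `2^{<ω}`: closed under initial segments. -/
def IsSubtree (T : Set (List (Fin 2))) : Prop :=
  ∀ s t : List (Fin 2), t ∈ T → s <+: t → s ∈ T

/-- `s` is a splitting node of `T`. -/
def IsSplitNode (T : Set (List (Fin 2))) (s : List (Fin 2)) : Prop :=
  (∃ t ∈ T, s ++ [0] <+: t) ∧ (∃ t ∈ T, s ++ [1] <+: t)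

/-- `T` is a perfect subtree. -/
def IsPerfectSubtree (T : Set (List (Fin 2))) : Prop :=
  IsSubtree T ∧ ∀ s ∈ T, ∃ t, IsSplitNode T t ∧ s <+: t ∧ s ≠ t

/-! Write a copy of `ℚ` inside `W_s ∩ A` as a strictly increasing `g : ℚ → 2^ω`, and fix
`a < b`. For `p < a < b < q` the first index `firstDiff (g p) (g q)` at which `g p` and `g q`
differ is at most `firstDiff (g a) (g b)`, because `W_{g p ↾ n}` is a lexicographic interval.
Take such a pair maximising it, with value `n`, and let `t = g p ↾ n`. By maximality, `g p'`
still lies in `W_{t⌢0}` for `p < p' < a`, and `g q'` lies in `W_{t⌢1}` for `b < q' < q`.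
Each of these sets therefore contains the image of a rational interval, which is again a
copy of `ℚ`. Doing this twice gives a proper splitting extension of any node of `T`. -/

open PiNat Set

theorem lexLE_iff_toLex_le {b : ℕ} {x y : ℕ → Fin b} : lexLE b x y ↔ toLex x ≤ toLex y := by
  rw [le_iff_eq_or_lt, toLex_inj]; rfl

theorem NonScattered.mono {A B : Set (ℕ → Fin 2)} (hAB : A ⊆ B) (hA : NonScattered A) :
    NonScattered B :=
  let ⟨Y, hYA, hY⟩ := hA
  ⟨Y, hYA.trans hAB, hY⟩

theorem nonScattered_iff {A : Set (ℕ → Fin 2)} :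
    NonScattered A ↔ ∃ g : ℚ → ℕ → Fin 2, StrictMono (toLex ∘ g) ∧ ∀ r, g r ∈ A := by
  constructor
  · rintro ⟨Y, hYA, e, he⟩
    refine ⟨fun r => (e r).1, strictMono_of_le_iff_le fun p q => ?_, fun r => hYA (e r).2⟩
    exact (he p q).trans lexLE_iff_toLex_le
  · rintro ⟨g, hg, hgA⟩
    refine ⟨range g, range_subset_iff.2 hgA, Equiv.ofInjective g hg.injective, fun p q => ?_⟩
    exact hg.le_iff_le.symm.trans lexLE_iff_toLex_le.symm

section Cylinder

variable {E : ℕ → Type*} [∀ n, LinearOrder (E n)]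

theorem mem_cylinder_of_toLex_le_of_le {w x y z : ∀ n, E n} {n : ℕ} (hx : x ∈ cylinder w n)
    (hy : y ∈ cylinder w n) (hxz : toLex x ≤ toLex z) (hzy : toLex z ≤ toLex y) :
    z ∈ cylinder w n := by
  intro i hi
  induction i using Nat.strong_induction_on with
  | _ i ih =>
    have hxz' : ∀ j < i, x j = z j := fun j hj =>
      (hx j (hj.trans hi)).trans (ih j hj (hj.trans hi)).symm
    have hzy' : ∀ j < i, z j = y j := fun j hj =>
      (ih j hj (hj.trans hi)).trans (hy j (hj.trans hi)).symm
    exact le_antisymm ((Pi.apply_le_of_toLex hzy hzy').trans_eq (hy i hi))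
      ((hx i hi).symm.trans_le (Pi.apply_le_of_toLex hxz hxz'))

theorem firstDiff_le_firstDiff_of_toLex_le {x y z w : ∀ n, E n} (hxz : toLex x ≤ toLex z)
    (hzy : toLex z ≤ toLex y) (hxw : toLex x ≤ toLex w) (hwy : toLex w ≤ toLex y) (hzw : z ≠ w) :
    firstDiff x y ≤ firstDiff z w := by
  have hy : y ∈ cylinder x (firstDiff x y) :=
    (mem_cylinder_comm _ _ _).1 (mem_cylinder_firstDiff x y)
  have hz := mem_cylinder_of_toLex_le_of_le (self_mem_cylinder x _) hy hxz hzy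
  have hw := mem_cylinder_of_toLex_le_of_le (self_mem_cylinder x _) hy hxw hwy
  rw [← mem_cylinder_iff_eq.1 hw] at hz
  exact (mem_cylinder_iff_le_firstDiff hzw _).1 hz

end Cylinder

section Nodes

variable {b : ℕ} {s t : List (Fin b)} {x : ℕ → Fin b}

theorem mem_W_iff : x ∈ W b s ↔ ∀ i (hi : i < s.length), x i = s[i] := by
  simp [W, List.get_eq_getElem]

theorem W_eq_cylinder (hx : x ∈ W b s) : W b s = cylinder x s.length := by
  ext y
  rw [mem_W_iff, mem_cylinder_iff]
  exact forall₂_congr fun i hi => by rw [mem_W_iff.1 hx i hi]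

theorem W_mono (h : s <+: t) : W b t ⊆ W b s := fun y hy =>
  mem_W_iff.2 fun i hi => by rw [mem_W_iff.1 hy i (hi.trans_le h.length_le), h.getElem hi]

theorem mem_W_ofFn (x : ℕ → Fin b) (n : ℕ) : x ∈ W b (List.ofFn fun i : Fin n => x i) := by
  simp [mem_W_iff]

theorem mem_W_append_apply_length (hx : x ∈ W b s) : x ∈ W b (s ++ [x s.length]) := by
  refine mem_W_iff.2 fun i hi => ?_
  rcases Nat.lt_succ_iff_lt_or_eq.1 (by simpa using hi) with hi' | rfl
  · rw [List.getElem_append_left hi']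
    exact mem_W_iff.1 hx i hi'
  · simp

theorem prefix_of_mem_W (hs : x ∈ W b s) (ht : x ∈ W b t) (hst : s.length ≤ t.length) :
    s <+: t := by
  refine List.prefix_iff_eq_take.2 (List.ext_getElem (by simpa using hst) fun i hs' ht' => ?_)
  rw [List.getElem_take, ← mem_W_iff.1 hs i hs', ← mem_W_iff.1 ht i]

end Nodes

theorem mem_cylinder_succ_or_of_toLex_le_of_le {x y z : ℕ → Fin 2} (hxz : toLex x ≤ toLex z)
    (hzy : toLex z ≤ toLex y) :
    z ∈ cylinder x (firstDiff x y + 1) ∨ z ∈ cylinder y (firstDiff x y + 1) := by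
  by_cases hxy : x = y
  · subst hxy
    left
    rw [toLex_inj.1 (le_antisymm hzy hxz)]
    exact self_mem_cylinder _ _
  set n := firstDiff x y
  have hyx : y ∈ cylinder x n := (mem_cylinder_comm _ _ _).1 (mem_cylinder_firstDiff x y)
  have hzx : z ∈ cylinder x n := mem_cylinder_of_toLex_le_of_le (self_mem_cylinder x n) hyx hxz hzy
  have hzy' : z ∈ cylinder y n := by rwa [← mem_cylinder_iff_eq.1 hyx] at hzx
  have hzn : z n = x n ∨ z n = y n := by
    have key : ∀ a b c : Fin 2, a ≤ c → c ≤ b → a ≠ b → c = a ∨ c = b := by decide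
    exact key _ _ _ (Pi.apply_le_of_toLex hxz fun j hj => (hzx j hj).symm)
      (Pi.apply_le_of_toLex hzy hzy') (apply_firstDiff_ne hxy)
  have hsucc : ∀ {u v : ℕ → Fin 2}, u ∈ cylinder v n → u n = v n → u ∈ cylinder v (n + 1) :=
    fun hu hn i hi => (Nat.lt_succ_iff_lt_or_eq.1 hi).elim (hu i) (fun h => h ▸ hn)
  exact hzn.imp (hsucc hzx) (hsucc hzy')

theorem exists_mem_cylinder_firstDiff_succ {α : Type*} [LinearOrder α] [DenselyOrdered α]
    [NoMinOrder α] [NoMaxOrder α] [Nonempty α] {g : α → ℕ → Fin 2} (hg : StrictMono (toLex ∘ g)) :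
    ∃ p q, p < q ∧ ∃ p' q', p < p' ∧ q' < q ∧
      g p' ∈ cylinder (g p) (firstDiff (g p) (g q) + 1) ∧
      g q' ∈ cylinder (g q) (firstDiff (g p) (g q) + 1) := by
  have hinj : Function.Injective g := hg.injective
  obtain ⟨a⟩ := ‹Nonempty α›
  obtain ⟨b, hab⟩ := exists_gt a
  set F := {n | ∃ p q, p < a ∧ b < q ∧ firstDiff (g p) (g q) = n}
  have hbdd : BddAbove F := by
    refine ⟨firstDiff (g a) (g b), ?_⟩
    rintro _ ⟨p, q, hpa, hbq, rfl⟩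
    exact firstDiff_le_firstDiff_of_toLex_le (hg hpa).le (hg (hab.trans hbq)).le
      (hg (hpa.trans hab)).le (hg hbq).le (hinj.ne hab.ne)
  obtain ⟨p₀, hp₀⟩ := exists_lt a
  obtain ⟨q₀, hq₀⟩ := exists_gt b
  have hne : F.Nonempty := ⟨_, p₀, q₀, hp₀, hq₀, rfl⟩
  obtain ⟨p, q, hpa, hbq, hn⟩ := Nat.sSup_mem hne hbdd
  have hmax : ∀ {p' q'}, p' < a → b < q' → firstDiff (g p') (g q') ≤ firstDiff (g p) (g q) :=
    fun hp' hq' => hn ▸ le_csSup hbdd ⟨_, _, hp', hq', rfl⟩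
  obtain ⟨p', hpp', hp'a⟩ := exists_between hpa
  obtain ⟨q', hbq', hq'q⟩ := exists_between hbq
  have hp'q : p' < q := hp'a.trans (hab.trans hbq)
  have hpq' : p < q' := hpa.trans (hab.trans hbq')
  refine ⟨p, q, hpa.trans (hab.trans hbq), p', q', hpp', hq'q, ?_, ?_⟩
  · refine (mem_cylinder_succ_or_of_toLex_le_of_le (hg hpp').le (hg hp'q).le).resolve_right
      fun h => ?_
    have := (mem_cylinder_iff_le_firstDiff (hinj.ne hp'q.ne) _).1 h
    have := hmax hp'a hbq
    omega
  · refine (mem_cylinder_succ_or_of_toLex_le_of_le (hg hpq').le (hg hq'q).le).resolve_left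
      fun h => ?_
    have := (mem_cylinder_iff_le_firstDiff (hinj.ne hpq'.ne).symm _).1 h
    rw [firstDiff_comm (g q')] at this
    have := hmax hpa hbq'
    omega

theorem nonScattered_cylinder_inter_of_lt {A : Set (ℕ → Fin 2)} {x : ℕ → Fin 2} {n : ℕ}
    {g : ℚ → ℕ → Fin 2} (hg : StrictMono (toLex ∘ g)) (hgA : ∀ r, g r ∈ A) {p q : ℚ} (hpq : p < q)
    (hp : g p ∈ cylinder x n) (hq : g q ∈ cylinder x n) : NonScattered (cylinder x n ∩ A) := by
  have := (nonempty_Ioo.2 hpq).to_subtype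
  obtain ⟨φ⟩ := Order.iso_of_countable_dense ℚ (Ioo p q)
  refine nonScattered_iff.2 ⟨fun r => g (φ r),
    hg.comp ((Subtype.strictMono_coe _).comp φ.strictMono), fun r => ⟨?_, hgA _⟩⟩
  exact mem_cylinder_of_toLex_le_of_le hp hq (hg.monotone (φ r).2.1.le) (hg.monotone (φ r).2.2.le)

theorem exists_prefix_children_nonScattered {A : Set (ℕ → Fin 2)} {s : List (Fin 2)}
    (hs : NonScattered (W 2 s ∩ A)) :
    ∃ t, s <+: t ∧ NonScattered (W 2 (t ++ [0]) ∩ A) ∧ NonScattered (W 2 (t ++ [1]) ∩ A) := by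
  obtain ⟨g, hg, hgA⟩ := nonScattered_iff.1 hs
  obtain ⟨p, q, hpq, p', q', hpp', hq'q, hp', hq'⟩ := exists_mem_cylinder_firstDiff_succ hg
  set n := firstDiff (g p) (g q)
  set t := List.ofFn fun i : Fin n => g p i
  have hne : g p ≠ g q := hg.injective.ne hpq.ne
  have ht : t.length = n := List.length_ofFn
  have hp : g p ∈ W 2 t := mem_W_ofFn _ _
  have hq : g q ∈ W 2 t := by
    rw [W_eq_cylinder hp, ht, mem_cylinder_comm]
    exact mem_cylinder_firstDiff _ _
  have hchild : ∀ {x}, x ∈ W 2 t → W 2 (t ++ [x n]) = cylinder x (n + 1) := fun hx => by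
    rw [← ht, W_eq_cylinder (mem_W_append_apply_length hx)]
    simp
  have hpn : g p n = 0 ∧ g q n = 1 := by
    have key : ∀ a b : Fin 2, a < b → a = 0 ∧ b = 1 := by decide
    exact key _ _ (lt_of_le_of_ne (Pi.apply_le_of_toLex (hg hpq).le
      fun j hj => apply_eq_of_lt_firstDiff hj) (apply_firstDiff_ne hne))
  have hsn : s.length ≤ n := by
    have hqs := (hgA q).1
    rw [W_eq_cylinder (hgA p).1, mem_cylinder_comm] at hqs
    exact (mem_cylinder_iff_le_firstDiff hne _).1 hqs
  refine ⟨t, prefix_of_mem_W (hgA p).1 hp (ht ▸ hsn), ?_, ?_⟩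
  · rw [← hpn.1, hchild hp]
    exact nonScattered_cylinder_inter_of_lt hg (fun r => (hgA r).2) hpp' (self_mem_cylinder _ _) hp'
  · rw [← hpn.2, hchild hq]
    exact nonScattered_cylinder_inter_of_lt hg (fun r => (hgA r).2) hq'q hq' (self_mem_cylinder _ _)

theorem nonscattered_tree_perfect_general (A : Set (ℕ → Fin 2)) :
    IsPerfectSubtree {s : List (Fin 2) | NonScattered (W 2 s ∩ A)} := by
  refine ⟨fun s t ht hst => NonScattered.mono (inter_subset_inter_left A (W_mono hst)) ht,
    fun s hs => ?_⟩
  obtain ⟨t, hst, ht0, -⟩ := exists_prefix_children_nonScattered hs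
  obtain ⟨u, htu, hu0, hu1⟩ := exists_prefix_children_nonScattered ht0
  have hlen : s.length < u.length :=
    calc s.length ≤ t.length := hst.length_le
      _ < (t ++ [0]).length := by simp
      _ ≤ u.length := htu.length_le
  exact ⟨u, ⟨⟨_, hu0, List.prefix_rfl⟩, ⟨_, hu1, List.prefix_rfl⟩⟩,
    hst.trans ((List.prefix_append t [0]).trans htu), fun h => hlen.ne (congrArg List.length h)⟩

/-- if `A ⊆ 2^ω` is non scattered then
`T = {s : W_s ∩ A is non scattered}` is a perfect subtree. -/
theorem nonscattered_tree_perfect (A : Set (ℕ → Fin 2)) (hA : NonScattered A) :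
    IsPerfectSubtree {s : List (Fin 2) | NonScattered (W 2 s ∩ A)} :=
  nonscattered_tree_perfect_general A
end

section
/- Let b ≥ 2, let h ∈ C↑_sur(b^ω), and let x_0 <_lex ... <_lex x_{l-1} be elements of Y_h. Set U_0 = {x : x ≤_lex x_0}, U_i = {x : x_{i-1} <_lex x ≤_lex x_i} for 1 ≤ i < l, V_0 = {y : y ≤_lex h(x_0)}, V_i = {y : h(x_{i-1}) <_lex y ≤_lex h(x_i)}. Then (h(x_i))_{i<l} is a strictly ≤_lex-increasing tuple in A_b and U_i = h⁻¹(V_i) for all i < l. -/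
section helpers

variable {b : ℕ}

lemma lexLT_irrefl' (x : ℕ → Fin b) : ¬ lexLT b x x := by
  rintro ⟨n, -, hn⟩
  exact lt_irrefl _ hn

lemma lexLT_asymm' {x y : ℕ → Fin b} (h1 : lexLT b x y) (h2 : lexLT b y x) : False := by
  obtain ⟨n, hn1, hn2⟩ := h1
  obtain ⟨m, hm1, hm2⟩ := h2
  rcases lt_trichotomy n m with hc | hc | hc
  · rw [hm1 n hc] at hn2; exact lt_irrefl _ hn2
  · subst hc; exact lt_asymm hn2 hm2
  · rw [hn1 m hc] at hm2; exact lt_irrefl _ hm2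

lemma lexLE_antisymm' {x y : ℕ → Fin b} (h1 : lexLE b x y) (h2 : lexLE b y x) : x = y := by
  rcases h1 with h1 | h1
  · exact h1
  rcases h2 with h2 | h2
  · exact h2.symm
  · exact (lexLT_asymm' h1 h2).elim

lemma lex_total' (x y : ℕ → Fin b) : lexLE b x y ∨ lexLT b y x := by
  classical
  by_cases hxy : x = y
  · exact Or.inl (Or.inl hxy)
  · have hne : ∃ n, x n ≠ y n := Function.ne_iff.mp hxy
    have hspec : x (Nat.find hne) ≠ y (Nat.find hne) := Nat.find_spec hne
    have hmin : ∀ m, m < Nat.find hne → x m = y m := fun m hm =>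
      not_not.mp (Nat.find_min hne hm)
    rcases lt_or_gt_of_ne hspec with hlt | hgt
    · exact Or.inl (Or.inr ⟨_, hmin, hlt⟩)
    · exact Or.inr ⟨_, fun m hm => (hmin m hm).symm, hgt⟩

lemma lexLT_iff_not_le' (x y : ℕ → Fin b) : lexLT b x y ↔ ¬ lexLE b y x := by
  constructor
  · intro hlt hle
    rcases hle with hh | hh
    · subst hh; exact lexLT_irrefl' _ hlt
    · exact lexLT_asymm' hlt hh
  · intro hnle
    rcases lex_total' y x with hh | hh
    · exact absurd hh hnle
    · exact hh

lemma key_iff {h : (ℕ → Fin b) → (ℕ → Fin b)} (hh : CSur b h)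
    {x : ℕ → Fin b} (hx : x ∈ Yset b h) (z : ℕ → Fin b) :
    lexLE b (h z) (h x) ↔ lexLE b z x := by
  constructor
  · intro hle
    rcases lex_total' z x with hzx | hxz
    · exact hzx
    · have h1 : lexLE b (h x) (h z) := hh.2.2 x z (Or.inr hxz)
      have heq : h z = h x := lexLE_antisymm' hle h1
      obtain ⟨⟨s, hgs⟩, -⟩ := hx
      have hzW : z ∈ h ⁻¹' W b s := by
        show h z ∈ W b s
        rw [heq]
        exact hgs.1
      exact hgs.2 z hzW
  · exact fun hle => hh.2.2 z x hle

lemma le_of_top' {x : ℕ → Fin b} (htop : ∀ n, ∀ j : Fin b, j ≤ x n)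
    (y : ℕ → Fin b) : lexLE b y x := by
  classical
  by_cases hxy : y = x
  · exact Or.inl hxy
  · have hne : ∃ n, y n ≠ x n := Function.ne_iff.mp hxy
    refine Or.inr ⟨Nat.find hne, fun m hm => not_not.mp (Nat.find_min hne hm), ?_⟩
    exact lt_of_le_of_ne (htop _ _) (Nat.find_spec hne)

lemma greatest_tail' (hb0 : 0 < b) {h : (ℕ → Fin b) → (ℕ → Fin b)} (hh : CSur b h)
    {s : List (Fin b)} {x : ℕ → Fin b} (hx : IsGreatestLex b (h ⁻¹' W b s) x) :
    ∀ n, s.length ≤ n → ∀ j : Fin b, j ≤ h x n := by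
  classical
  set T : Fin b := ⟨b - 1, by omega⟩ with hT
  set M : ℕ → Fin b := fun n => if hn : n < s.length then s.get ⟨n, hn⟩ else T with hM
  have hMW : M ∈ W b s := fun i hi => by simp [hM, hi]
  have hMg : ∀ y ∈ W b s, lexLE b y M := by
    intro y hy
    by_cases hyM : y = M
    · exact Or.inl hyM
    have hne : ∃ n, y n ≠ M n := Function.ne_iff.mp hyM
    have hlen : ¬ Nat.find hne < s.length := by
      intro hlt
      exact Nat.find_spec hne (by rw [hy _ hlt]; simp [hM, hlt])
    refine Or.inr ⟨Nat.find hne, fun m hm => not_not.mp (Nat.find_min hne hm), ?_⟩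
    have hMn : M (Nat.find hne) = T := by simp [hM, hlen]
    rw [hMn]
    refine lt_of_le_of_ne ?_ (fun hc => Nat.find_spec hne (hc.trans hMn.symm))
    rw [Fin.le_def]
    show (y (Nat.find hne)).val ≤ b - 1
    have := (y (Nat.find hne)).isLt
    omega
  have hxW : h x ∈ W b s := hx.1
  have h1 : lexLE b (h x) M := hMg _ hxW
  obtain ⟨z, hz⟩ := hh.2.1 M
  have hzW : z ∈ h ⁻¹' W b s := by
    show h z ∈ W b s
    rw [hz]
    exact hMW
  have h2 : lexLE b (h z) (h x) := hh.2.2 z x (hx.2 z hzW)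
  rw [hz] at h2
  have heq : h x = M := lexLE_antisymm' h1 h2
  intro n hn j
  rw [heq]
  have hMn : M n = T := by simp [hM, Nat.not_lt.mpr hn]
  rw [hMn, Fin.le_def]
  show (j : ℕ) ≤ b - 1
  have := j.isLt
  omega

end helpers

/-- for an increasing tuple `(x_i)_{i<l}` in `Y_h`, the images
`(h(x_i))_{i<l}` form an increasing tuple in `A_b` and the corresponding intervals
satisfy `U_i = h⁻¹(V_i)`. -/
theorem tuples_map_to_Ab (b : ℕ) (hb : 2 ≤ b)
    (h : (ℕ → Fin b) → (ℕ → Fin b)) (hh : CSur b h)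
    (l : ℕ) (x : Fin l → (ℕ → Fin b))
    (hmem : ∀ i, x i ∈ Yset b h)
    (hmono : ∀ i j, i < j → lexLT b (x i) (x j)) :
    (∀ i, h (x i) ∈ AbSet b) ∧
    (∀ i j, i < j → lexLT b (h (x i)) (h (x j))) ∧
    (∀ i : Fin l, (i : ℕ) = 0 →
      {z | lexLE b z (x i)} = h ⁻¹' {z | lexLE b z (h (x i))}) ∧
    (∀ i j : Fin l, (j : ℕ) + 1 = (i : ℕ) →
      {z | lexLT b (x j) z ∧ lexLE b z (x i)} =
        h ⁻¹' {z | lexLT b (h (x j)) z ∧ lexLE b z (h (x i))}) := by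
  have hb0 : 0 < b := by omega
  have hkey : ∀ i, ∀ z, lexLE b (h z) (h (x i)) ↔ lexLE b z (x i) :=
    fun i z => key_iff hh (hmem i) z
  have hAb : ∀ i, h (x i) ∈ AbSet b := by
    intro i
    obtain ⟨⟨s, hgs⟩, hnt⟩ := hmem i
    constructor
    · exact ⟨s.length, greatest_tail' hb0 hh hgs⟩
    · intro htop
      have hTT : lexLE b (h (fun _ => (⟨b - 1, by omega⟩ : Fin b))) (h (x i)) :=
        le_of_top' htop _
      have hT2 := (hkey i _).mp hTT
      rcases hT2 with heq | hlt
      · apply hnt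
        intro n j
        rw [← heq]
        show (j : ℕ) ≤ b - 1
        have := j.isLt
        omega
      · obtain ⟨n, -, hn⟩ := hlt
        have hle : x i n ≤ (⟨b - 1, by omega⟩ : Fin b) := by
          rw [Fin.le_def]
          show (x i n : ℕ) ≤ b - 1
          have := (x i n).isLt
          omega
        exact absurd hn (not_lt.mpr hle)
  have hsm : ∀ i j, i < j → lexLT b (h (x i)) (h (x j)) := by
    intro i j hij
    have hle : lexLE b (h (x i)) (h (x j)) := hh.2.2 _ _ (Or.inr (hmono i j hij))
    rcases hle with heq | hlt
    · exfalso
      have h' : lexLE b (x j) (x i) := (hkey i _).mp (Or.inl heq.symm)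
      rcases h' with h' | h'
      · have hm := hmono i j hij
        rw [h'] at hm
        exact lexLT_irrefl' _ hm
      · exact lexLT_asymm' (hmono i j hij) h'
    · exact hlt
  refine ⟨hAb, hsm, ?_, ?_⟩
  · intro i _
    ext z
    simp only [Set.mem_setOf_eq, Set.mem_preimage]
    exact (hkey i z).symm
  · intro i j _
    ext z
    simp only [Set.mem_setOf_eq, Set.mem_preimage]
    constructor
    · rintro ⟨h1, h2⟩
      refine ⟨?_, (hkey i z).mpr h2⟩
      rw [lexLT_iff_not_le']
      intro hc
      exact (lexLT_iff_not_le' _ _).mp h1 ((hkey j z).mp hc)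
    · rintro ⟨h1, h2⟩
      refine ⟨?_, (hkey i z).mp h2⟩
      rw [lexLT_iff_not_le']
      intro hc
      exact (lexLT_iff_not_le' _ _).mp h1 ((hkey j z).mpr hc)
end
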